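/- Dynkin–Specht–Wever Lemma (non-associative form): Let d be a derivation of the free unital non-associative Hopf algebra k{X} that preserves the space of primitive elements, and define γ_d(u) := Σ u₍₁₎\d(u₍₂₎). Then for every u ∈ k{X} and every primitive element a, γ_d(ua) = ε(u)·d(a) + Σ ⟨u₍₁₎; a, γ_d(u₍₂₎)⟩, where ⟨w; a, b⟩ denotes the Shestakov–Umirbaev operation satisfying (w a)b − (w b)a = − Σ w₍₁₎⟨w₍₂₎; a, b⟩. -/

import Mathlib

/- STATEMENT 2 (non-associative Dynkin–Specht–Wever Lemma): Let d be a derivation of the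
free unital non-associative Hopf algebra k{X} preserving primitive elements, and set
γ_d(u) := Σ u₍₁₎ \ d(u₍₂₎).  Then for every u and every primitive a,
γ_d(u·a) = ε(u)·d(a) + Σ ⟨u₍₁₎; a, γ_d(u₍₂₎)⟩, where ⟨·;·,·⟩ is the Shestakov–Umirbaev
operation characterized by (w a)b − (w b)a = − Σ w₍₁₎ ⟨w₍₂₎; a, b⟩. -/

open TensorProduct

noncomputable section

variable (K : Type*) [Field K] [CharZero K] (X : Type*)

/-- The free unital non-associative algebra on `X`. -/
abbrev FNA := MonoidAlgebra K (WithOne (FreeMagma X))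

def genF (x : X) : FNA K X :=
  MonoidAlgebra.single (↑(FreeMagma.of x) : WithOne (FreeMagma X)) 1

/-- `γ_d(u) = Σ u₍₁₎ \ d(u₍₂₎)`. -/
def gammaD (Δ : FNA K X →ₗ[K] FNA K X ⊗[K] FNA K X)
    (ldiv : FNA K X →ₗ[K] FNA K X →ₗ[K] FNA K X) (d : FNA K X →ₗ[K] FNA K X) :
    FNA K X →ₗ[K] FNA K X :=
  (TensorProduct.lift (ldiv.compl₂ d)).comp Δ

/-!
Write `Σ B(u₍₁₎, u₍₂₎)` for `lift B (Δ u)`. As `a` is primitive,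
`Δ(ua) = Σ u₍₁₎a ⊗ u₍₂₎ + u₍₁₎ ⊗ u₍₂₎a`, so the Leibniz rule gives
`γ(ua) = Σ (u₍₁₎a)\d(u₍₂₎) + Σ u₍₁₎\(d(u₍₂₎)a) + ε(u) d(a)`.
Coassociativity, the counit law and the identity `Σ u₍₁₎(u₍₂₎\v) = ε(u)v` give
`Σ u₍₁₎γ(u₍₂₎) = d(u)`; with the defining identity of `⟨;,⟩` this yields
`Σ u₍₁₎⟨u₍₂₎; a, γ(u₍₃₎)⟩ = d(u)a - Σ (u₍₁₎a)γ(u₍₂₎)`, and dividing on the left,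
`Σ ⟨u₍₁₎; a, γ(u₍₂₎)⟩ = Σ u₍₁₎\(d(u₍₂₎)a) - Σ u₍₁₎\((u₍₂₎a)γ(u₍₃₎))`.
Finally `Σ (u₍₁₎a)\d(u₍₂₎) + Σ u₍₁₎\((u₍₂₎a)γ(u₍₃₎))` is `Σ (u₍₁₎a)₍₁₎\((u₍₁₎a)₍₂₎γ(u₍₂₎))`,
which is `Σ ε(u₍₁₎a)γ(u₍₂₎) = 0` since `ε(a) = 0`.
On `k{X}`, coassociativity and the counit law hold because both sides are multiplicative and
agree on the generators.
-/

namespace TensorProduct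

variable {R M N P Q : Type*} [CommSemiring R] [AddCommMonoid M] [Module R M] [AddCommMonoid Q]
  [Module R Q]

theorem lift_compl₂_add [AddCommMonoid N] [Module R N] [AddCommMonoid P] [Module R P]
    (B : M →ₗ[R] N →ₗ[R] P) (f g : Q →ₗ[R] N) :
    lift (B.compl₂ (f + g)) = lift (B.compl₂ f) + lift (B.compl₂ g) :=
  ext' fun _ _ => map_add (B _) _ _

theorem lift_compl₂_sub [AddCommGroup N] [Module R N] [AddCommGroup P] [Module R P]
    (B : M →ₗ[R] N →ₗ[R] P) (f g : Q →ₗ[R] N) :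
    lift (B.compl₂ (f - g)) = lift (B.compl₂ f) - lift (B.compl₂ g) :=
  ext' fun _ _ => map_sub (B _) _ _

end TensorProduct

section NonAssoc

open TensorProduct

variable {R A B C : Type*} [CommSemiring R]
  [NonUnitalNonAssocSemiring A] [Module R A] [SMulCommClass R A A] [IsScalarTower R A A]
  [NonUnitalNonAssocSemiring B] [Module R B] [SMulCommClass R B B] [IsScalarTower R B B]
  [NonUnitalNonAssocSemiring C] [Module R C]

theorem LinearMap.map_mul_of_map_mul_tmul' {f : A ⊗[R] B →ₗ[R] C}
    (hf : ∀ (a₁ a₂ : A) (b₁ b₂ : B), f ((a₁ * a₂) ⊗ₜ (b₁ * b₂)) = f (a₁ ⊗ₜ b₁) * f (a₂ ⊗ₜ b₂))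
    (x y : A ⊗[R] B) : f (x * y) = f x * f y := by
  induction x using TensorProduct.induction_on with
  | zero => simp
  | add x₁ x₂ h₁ h₂ => simp only [add_mul, map_add, h₁, h₂]
  | tmul a b =>
    induction y using TensorProduct.induction_on with
    | zero => simp
    | add y₁ y₂ h₁ h₂ => simp only [mul_add, map_add, h₁, h₂]
    | tmul a' b' => rw [Algebra.TensorProduct.tmul_mul_tmul, hf]

variable [SMulCommClass R C C] [IsScalarTower R C C]

theorem TensorProduct.assoc_mul (x y : (A ⊗[R] B) ⊗[R] C) :
    TensorProduct.assoc R A B C (x * y) =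
      TensorProduct.assoc R A B C x * TensorProduct.assoc R A B C y := by
  refine (TensorProduct.assoc R A B C).toLinearMap.map_mul_of_map_mul_tmul'
    (fun p q c c' => ?_) x y
  induction p using TensorProduct.induction_on with
  | zero => simp
  | add p₁ p₂ h₁ h₂ =>
    simp only [add_mul, add_tmul, map_add, LinearEquiv.coe_coe] at h₁ h₂ ⊢
    rw [h₁, h₂]
  | tmul a b =>
    induction q using TensorProduct.induction_on with
    | zero => simp
    | add q₁ q₂ h₁ h₂ =>
      simp only [mul_add, add_tmul, map_add, LinearEquiv.coe_coe] at h₁ h₂ ⊢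
      rw [h₁, h₂]
    | tmul a' b' => simp [Algebra.TensorProduct.tmul_mul_tmul]

theorem LinearMap.rTensor_apply_mul {f : A →ₗ[R] B} (hf : ∀ x y, f (x * y) = f x * f y)
    (t s : A ⊗[R] C) : f.rTensor C (t * s) = f.rTensor C t * f.rTensor C s :=
  map_mul_of_map_mul_tmul' (fun a a' c c' => by
    simp only [Algebra.TensorProduct.tmul_mul_tmul, rTensor_tmul, hf]) t s

theorem LinearMap.lTensor_apply_mul {f : B →ₗ[R] C} (hf : ∀ x y, f (x * y) = f x * f y)
    (t s : A ⊗[R] B) : f.lTensor A (t * s) = f.lTensor A t * f.lTensor A s :=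
  map_mul_of_map_mul_tmul' (fun a a' c c' => by
    simp only [Algebra.TensorProduct.tmul_mul_tmul, lTensor_tmul, hf]) t s

end NonAssoc

namespace Comultiplication

open TensorProduct

variable {R A : Type*} [CommSemiring R] [AddCommMonoid A] [Module R A]

def IsCoassociative (Δ : A →ₗ[R] A ⊗[R] A) : Prop :=
  (TensorProduct.assoc R A A A).toLinearMap ∘ₗ Δ.rTensor A ∘ₗ Δ = Δ.lTensor A ∘ₗ Δ

def IsCounit (ε : A →ₗ[R] R) (Δ : A →ₗ[R] A ⊗[R] A) : Prop :=
  ε.rTensor A ∘ₗ Δ = TensorProduct.mk R R A 1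

variable {Δ : A →ₗ[R] A ⊗[R] A} {ε : A →ₗ[R] R}
  {M P : Type*} [AddCommMonoid M] [Module R M] [AddCommMonoid P] [Module R P]

theorem IsCounit.map_comul (hε : IsCounit ε Δ) (E : A ⊗[R] A →ₗ[R] M) (f : A →ₗ[R] M)
    (h : ∀ s t, E (s ⊗ₜ t) = ε s • f t) (u : A) : E (Δ u) = f u := by
  have hE : E = f ∘ₗ (TensorProduct.lid R A).toLinearMap ∘ₗ ε.rTensor A :=
    ext' fun s t => by simp [h]
  rw [hE, LinearMap.comp_apply, LinearMap.comp_apply, ← LinearMap.comp_apply (ε.rTensor A),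
    show ε.rTensor A ∘ₗ Δ = _ from hε]
  simp

theorem IsCoassociative.map_lTensor_comul (hΔ : IsCoassociative Δ)
    (Φ : A ⊗[R] (A ⊗[R] A) →ₗ[R] M) (E : A ⊗[R] A →ₗ[R] M)
    (h : ∀ s t, Φ (TensorProduct.assoc R A A A (Δ s ⊗ₜ t)) = E (s ⊗ₜ t)) (u : A) :
    Φ (Δ.lTensor A (Δ u)) = E (Δ u) := by
  have hE : E = Φ ∘ₗ (TensorProduct.assoc R A A A).toLinearMap ∘ₗ Δ.rTensor A :=
    ext' fun s t => by simp [h]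
  rw [hE, ← LinearMap.comp_apply (Δ.lTensor A), ← show _ = Δ.lTensor A ∘ₗ Δ from hΔ]
  rfl

theorem lift_compl₂_lift_assoc_tmul (D : A →ₗ[R] M →ₗ[R] P) (N : A →ₗ[R] A →ₗ[R] M)
    (η : A ⊗[R] A) (t : A) :
    lift (D.compl₂ (lift N)) (TensorProduct.assoc R A A A (η ⊗ₜ t)) =
      lift (D.compl₂ (N.flip t)) η := by
  induction η using TensorProduct.induction_on with
  | zero => simp
  | add η₁ η₂ h₁ h₂ => simp only [add_tmul, map_add, h₁, h₂]
  | tmul x y => simp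

theorem lift_compl₂_lift_lTensor (D : A →ₗ[R] M →ₗ[R] P) (N : A →ₗ[R] A →ₗ[R] M)
    (θ : A ⊗[R] A) :
    lift (D.compl₂ (lift N)) (Δ.lTensor A θ) = lift (D.compl₂ (lift N ∘ₗ Δ)) θ := by
  rw [LinearMap.lTensor, ← LinearMap.comp_apply, lift_comp_map]
  rfl

theorem IsCoassociative.lift_compl₂_comp_comul (hΔ : IsCoassociative Δ)
    (D : A →ₗ[R] M →ₗ[R] P) (N : A →ₗ[R] A →ₗ[R] M) (E : A ⊗[R] A →ₗ[R] P)
    (h : ∀ s t, lift (D.compl₂ (N.flip t)) (Δ s) = E (s ⊗ₜ t)) (u : A) :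
    lift (D.compl₂ (lift N ∘ₗ Δ)) (Δ u) = E (Δ u) := by
  rw [← lift_compl₂_lift_lTensor]
  exact hΔ.map_lTensor_comul _ E (fun s t => by rw [lift_compl₂_lift_assoc_tmul, h]) u

theorem IsCoassociative.lift_compl₂_comp_comul_of_isCounit (hΔ : IsCoassociative Δ)
    (hε : IsCounit ε Δ) (D : A →ₗ[R] M →ₗ[R] P) (N : A →ₗ[R] A →ₗ[R] M) (f : A →ₗ[R] P)
    (h : ∀ s t, lift (D.compl₂ (N.flip t)) (Δ s) = ε s • f t) (u : A) :
    lift (D.compl₂ (lift N ∘ₗ Δ)) (Δ u) = f u := by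
  rw [hΔ.lift_compl₂_comp_comul D N (lift ((LinearMap.lsmul R P ∘ₗ ε).compl₂ f)) h]
  exact hε.map_comul _ f (fun _ _ => rfl) u

end Comultiplication

namespace NonAssocHopf

open TensorProduct LinearMap Comultiplication

variable {R A : Type*} [CommRing R] [NonAssocRing A] [Module R A]
  {Δ : A →ₗ[R] A ⊗[R] A} {ε : A →ₗ[R] R}

theorem counit_eq_zero_of_primitive (hε : IsCounit ε Δ) (hε₁ : ε 1 = 1) {a : A}
    (ha : Δ a = a ⊗ₜ 1 + 1 ⊗ₜ a) : ε a = 0 := by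
  -- applying `ε` to the counit law at `a` gives `ε a = 2 • ε a`
  have h := hε.map_comul (lift ((lsmul R R ∘ₗ ε).compl₂ ε)) ε (fun _ _ => rfl) a
  simp only [ha, map_add, lift.tmul, compl₂_apply, coe_comp, Function.comp_apply, lsmul_apply,
    smul_eq_mul, hε₁] at h
  linear_combination h

variable [SMulCommClass R A A] [IsScalarTower R A A]

theorem lift_mul_primitive {M : Type*} [AddCommMonoid M] [Module R M]
    (B : A →ₗ[R] A →ₗ[R] M) (a : A) (θ : A ⊗[R] A) :
    lift B (θ * (a ⊗ₜ 1 + 1 ⊗ₜ a)) =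
      lift (B ∘ₗ mulRight R a) θ + lift (B.compl₂ (mulRight R a)) θ := by
  induction θ using TensorProduct.induction_on with
  | zero => simp
  | add θ₁ θ₂ h₁ h₂ =>
    rw [add_mul, map_add, h₁, h₂, map_add, map_add]
    abel
  | tmul s t =>
    rw [mul_add, Algebra.TensorProduct.tmul_mul_tmul, Algebra.TensorProduct.tmul_mul_tmul,
      mul_one, mul_one, map_add]
    rfl

variable (Δ) in
def gamma (ldiv : A →ₗ[R] A →ₗ[R] A) (d : A →ₗ[R] A) : A →ₗ[R] A :=
  lift (ldiv.compl₂ d) ∘ₗ Δ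

variable {ldiv : A →ₗ[R] A →ₗ[R] A} {d : A →ₗ[R] A} {br : A →ₗ[R] A →ₗ[R] A →ₗ[R] A}

theorem lift_mul_compl₂_gamma_comul (hΔ : IsCoassociative Δ) (hε : IsCounit ε Δ)
    (hldiv₂ : ∀ u v, lift ((mul R A).compl₂ (ldiv.flip v)) (Δ u) = ε u • v) (w : A) :
    lift ((mul R A).compl₂ (gamma Δ ldiv d)) (Δ w) = d w :=
  hΔ.lift_compl₂_comp_comul_of_isCounit hε (mul R A) (ldiv.compl₂ d) d
    (fun s t => hldiv₂ s (d t)) w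

theorem gamma_mul_primitive_eq_add (hΔmul : ∀ u v, Δ (u * v) = Δ u * Δ v)
    (hldiv₁ : ∀ u v, lift (ldiv.compl₂ ((mul R A).flip v)) (Δ u) = ε u • v)
    (hd : ∀ u v, d (u * v) = d u * v + u * d v) (u : A) {a : A}
    (ha : Δ a = a ⊗ₜ 1 + 1 ⊗ₜ a) :
    gamma Δ ldiv d (u * a) = lift ((ldiv ∘ₗ mulRight R a).compl₂ d) (Δ u) +
      lift (ldiv.compl₂ (mulRight R a ∘ₗ d)) (Δ u) + ε u • d a := by
  have hd_mulRight : d ∘ₗ mulRight R a = mulRight R a ∘ₗ d + (mul R A).flip (d a) :=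
    LinearMap.ext fun x => hd x a
  rw [gamma, comp_apply, hΔmul, ha, lift_mul_primitive]
  change _ + lift (ldiv.compl₂ (d ∘ₗ mulRight R a)) (Δ u) = _
  rw [hd_mulRight, lift_compl₂_add, LinearMap.add_apply, hldiv₁, add_assoc]
  rfl

theorem lift_mul_compl₂_bracket_comul (hΔ : IsCoassociative Δ) (hε : IsCounit ε Δ)
    (hldiv₂ : ∀ u v, lift ((mul R A).compl₂ (ldiv.flip v)) (Δ u) = ε u • v)
    (hbr : ∀ w a b, (w * a) * b - (w * b) * a =
      -lift ((mul R A).compl₂ ((br.flip a).flip b)) (Δ w)) (a w : A) :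
    lift ((mul R A).compl₂ (lift ((br.flip a).compl₂ (gamma Δ ldiv d)) ∘ₗ Δ)) (Δ w) =
      d w * a - lift ((mul R A).compl₁₂ (mulRight R a) (gamma Δ ldiv d)) (Δ w) := by
  set γ := gamma Δ ldiv d
  rw [hΔ.lift_compl₂_comp_comul (mul R A) ((br.flip a).compl₂ γ)
    (mulRight R a ∘ₗ lift ((mul R A).compl₂ γ) - lift ((mul R A).compl₁₂ (mulRight R a) γ))]
  · rw [LinearMap.sub_apply, comp_apply, lift_mul_compl₂_gamma_comul hΔ hε hldiv₂]
    rfl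
  · intro s t
    rw [LinearMap.sub_apply, comp_apply, lift.tmul, lift.tmul, compl₂_apply, compl₁₂_apply,
      mul_apply', mul_apply', mulRight_apply, mulRight_apply, ← neg_sub, hbr, neg_neg]
    rfl

theorem lift_bracket_compl₂_gamma_comul (hΔ : IsCoassociative Δ) (hε : IsCounit ε Δ)
    (hldiv₁ : ∀ u v, lift (ldiv.compl₂ ((mul R A).flip v)) (Δ u) = ε u • v)
    (hldiv₂ : ∀ u v, lift ((mul R A).compl₂ (ldiv.flip v)) (Δ u) = ε u • v)
    (hbr : ∀ w a b, (w * a) * b - (w * b) * a =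
      -lift ((mul R A).compl₂ ((br.flip a).flip b)) (Δ w)) (a u : A) :
    lift ((br.flip a).compl₂ (gamma Δ ldiv d)) (Δ u) =
      lift (ldiv.compl₂ (mulRight R a ∘ₗ d)) (Δ u) -
        lift (ldiv.compl₂ (lift ((mul R A).compl₁₂ (mulRight R a) (gamma Δ ldiv d)) ∘ₗ Δ))
          (Δ u) := by
  set F := lift ((br.flip a).compl₂ (gamma Δ ldiv d)) ∘ₗ Δ
  have hF := hΔ.lift_compl₂_comp_comul_of_isCounit hε ldiv ((mul R A).compl₂ F) F
    (fun s t => hldiv₁ s (F t)) u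
  have h_inner : lift ((mul R A).compl₂ F) ∘ₗ Δ = mulRight R a ∘ₗ d -
      lift ((mul R A).compl₁₂ (mulRight R a) (gamma Δ ldiv d)) ∘ₗ Δ :=
    LinearMap.ext (lift_mul_compl₂_bracket_comul hΔ hε hldiv₂ hbr a)
  rw [h_inner, lift_compl₂_sub] at hF
  exact hF.symm

theorem lift_ldiv_comp_mulRight_compl₂_comul (hΔ : IsCoassociative Δ) (hε : IsCounit ε Δ)
    (hΔmul : ∀ u v, Δ (u * v) = Δ u * Δ v) (hεmul : ∀ u v, ε (u * v) = ε u * ε v)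
    (hε₁ : ε 1 = 1) (hldiv₁ : ∀ u v, lift (ldiv.compl₂ ((mul R A).flip v)) (Δ u) = ε u • v)
    (hldiv₂ : ∀ u v, lift ((mul R A).compl₂ (ldiv.flip v)) (Δ u) = ε u • v)
    {a : A} (ha : Δ a = a ⊗ₜ 1 + 1 ⊗ₜ a) (u : A) :
    lift ((ldiv ∘ₗ mulRight R a).compl₂ d) (Δ u) =
      -lift (ldiv.compl₂ (lift ((mul R A).compl₁₂ (mulRight R a) (gamma Δ ldiv d)) ∘ₗ Δ))
        (Δ u) := by
  set γ := gamma Δ ldiv d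
  have hd : lift ((mul R A).compl₂ γ) ∘ₗ Δ = d :=
    LinearMap.ext (lift_mul_compl₂_gamma_comul hΔ hε hldiv₂)
  rw [eq_neg_iff_add_eq_zero, ← hd, ← lift_compl₂_lift_lTensor, ← lift_compl₂_lift_lTensor,
    ← LinearMap.add_apply, hΔ.map_lTensor_comul _ 0 _ u, LinearMap.zero_apply]
  intro s t
  rw [LinearMap.add_apply, lift_compl₂_lift_assoc_tmul, lift_compl₂_lift_assoc_tmul,
    LinearMap.zero_apply]
  have h := hldiv₁ (s * a) (γ t)
  rw [hΔmul, ha, lift_mul_primitive, hεmul, counit_eq_zero_of_primitive hε hε₁ ha, mul_zero,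
    zero_smul] at h
  exact h

theorem gamma_mul_primitive (hΔ : IsCoassociative Δ) (hε : IsCounit ε Δ)
    (hΔmul : ∀ u v, Δ (u * v) = Δ u * Δ v) (hεmul : ∀ u v, ε (u * v) = ε u * ε v)
    (hε₁ : ε 1 = 1) (hldiv₁ : ∀ u v, lift (ldiv.compl₂ ((mul R A).flip v)) (Δ u) = ε u • v)
    (hldiv₂ : ∀ u v, lift ((mul R A).compl₂ (ldiv.flip v)) (Δ u) = ε u • v)
    (hbr : ∀ w a b, (w * a) * b - (w * b) * a =
      -lift ((mul R A).compl₂ ((br.flip a).flip b)) (Δ w))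
    (hd : ∀ u v, d (u * v) = d u * v + u * d v) (u : A) {a : A}
    (ha : Δ a = a ⊗ₜ 1 + 1 ⊗ₜ a) :
    gamma Δ ldiv d (u * a) = ε u • d a + lift ((br.flip a).compl₂ (gamma Δ ldiv d)) (Δ u) := by
  rw [gamma_mul_primitive_eq_add hΔmul hldiv₁ hd u ha,
    lift_bracket_compl₂_gamma_comul hΔ hε hldiv₁ hldiv₂ hbr,
    lift_ldiv_comp_mulRight_compl₂_comul hΔ hε hΔmul hεmul hε₁ hldiv₁ hldiv₂ ha]
  abel

end NonAssocHopf

namespace FNA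

open TensorProduct LinearMap Comultiplication

variable {k Y : Type*} [Field k]

theorem lhom_ext {M : Type*} [AddCommMonoid M] [Module k M] {f g : FNA k Y →ₗ[k] M}
    (h_one : f 1 = g 1) (h_gen : ∀ y, f (genF k Y y) = g (genF k Y y))
    (h_mul : ∀ u v, f u = g u → f v = g v → f (u * v) = g (u * v)) : f = g := by
  refine MonoidAlgebra.lhom_ext' fun w => LinearMap.ext_ring ?_
  change f (MonoidAlgebra.single w 1) = g (MonoidAlgebra.single w 1)
  induction w using WithOne.recOneCoe with
  | one => exact h_one
  | coe v =>
    induction v using FreeMagma.recOnMul with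
    | ih1 y => exact h_gen y
    | ih2 v₁ v₂ h₁ h₂ =>
      rw [WithOne.coe_mul, ← one_mul (1 : k), ← MonoidAlgebra.single_mul_single]
      exact h_mul _ _ h₁ h₂

variable {Δ : FNA k Y →ₗ[k] FNA k Y ⊗[k] FNA k Y}

theorem isCoassociative_comul (hΔmul : ∀ u v, Δ (u * v) = Δ u * Δ v) (hΔone : Δ 1 = 1 ⊗ₜ 1)
    (hΔgen : ∀ y, Δ (genF k Y y) = genF k Y y ⊗ₜ 1 + 1 ⊗ₜ genF k Y y) :
    IsCoassociative Δ := by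
  refine lhom_ext ?_ (fun y => ?_) (fun u v hu hv => ?_)
  · simp [hΔone]
  · simp only [comp_apply, LinearEquiv.coe_coe, hΔgen, hΔone, map_add, rTensor_tmul,
      lTensor_tmul, add_tmul, tmul_add, TensorProduct.assoc_tmul]
    abel
  · simp only [comp_apply, LinearEquiv.coe_coe] at hu hv ⊢
    rw [hΔmul, rTensor_apply_mul hΔmul, TensorProduct.assoc_mul, lTensor_apply_mul hΔmul, hu, hv]

theorem isCounit {ε : FNA k Y →ₗ[k] k}
    (hΔmul : ∀ u v, Δ (u * v) = Δ u * Δ v) (hΔone : Δ 1 = 1 ⊗ₜ 1)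
    (hΔgen : ∀ y, Δ (genF k Y y) = genF k Y y ⊗ₜ 1 + 1 ⊗ₜ genF k Y y)
    (hεmul : ∀ u v, ε (u * v) = ε u * ε v) (hεone : ε 1 = 1) (hεgen : ∀ y, ε (genF k Y y) = 0) :
    IsCounit ε Δ := by
  refine lhom_ext ?_ (fun y => ?_) (fun u v hu hv => ?_)
  · simp [hΔone, hεone]
  · simp [hΔgen, hεone, hεgen]
  · simp only [comp_apply, mk_apply] at hu hv ⊢
    rw [hΔmul, rTensor_apply_mul hεmul, hu, hv, Algebra.TensorProduct.tmul_mul_tmul, one_mul]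

end FNA

theorem dynkin_specht_wever_nonassociative
    (Δ : FNA K X →ₗ[K] FNA K X ⊗[K] FNA K X) (ε : FNA K X →ₗ[K] K)
    (ldiv : FNA K X →ₗ[K] FNA K X →ₗ[K] FNA K X)
    (hΔmul : ∀ u v, Δ (u * v) = Δ u * Δ v)
    (hΔone : Δ 1 = 1 ⊗ₜ[K] 1)
    (hΔgen : ∀ x : X, Δ (genF K X x) = genF K X x ⊗ₜ[K] 1 + 1 ⊗ₜ[K] genF K X x)
    (hεmul : ∀ u v, ε (u * v) = ε u * ε v)
    (hεone : ε 1 = 1)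
    (hεgen : ∀ x : X, ε (genF K X x) = 0)
    (hldiv₁ : ∀ u v, TensorProduct.lift
        (ldiv.compl₂ ((LinearMap.mul K (FNA K X)).flip v)) (Δ u) = ε u • v)
    (hldiv₂ : ∀ u v, TensorProduct.lift
        ((LinearMap.mul K (FNA K X)).compl₂ (ldiv.flip v)) (Δ u) = ε u • v)
    -- the Shestakov–Umirbaev bracket ⟨w; a, b⟩, characterized by
    -- (w a)b − (w b)a = − Σ w₍₁₎ ⟨w₍₂₎; a, b⟩
    (br : FNA K X →ₗ[K] FNA K X →ₗ[K] FNA K X →ₗ[K] FNA K X)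
    (hbr : ∀ w a b, (w * a) * b - (w * b) * a =
      -(TensorProduct.lift
          ((LinearMap.mul K (FNA K X)).compl₂ ((br.flip a).flip b)) (Δ w)))
    -- d is a derivation preserving primitive elements
    (d : FNA K X →ₗ[K] FNA K X)
    (hd : ∀ u v, d (u * v) = d u * v + u * d v) :
    ∀ (u a : FNA K X), Δ a = a ⊗ₜ[K] 1 + 1 ⊗ₜ[K] a →
      gammaD K X Δ ldiv d (u * a) =
        ε u • d a +
          TensorProduct.lift
            ((br.flip a).compl₂ (gammaD K X Δ ldiv d)) (Δ u) := fun u _ ha =>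
  NonAssocHopf.gamma_mul_primitive (FNA.isCoassociative_comul hΔmul hΔone hΔgen)
    (FNA.isCounit hΔmul hΔone hΔgen hεmul hεone hεgen) hΔmul hεmul hεone hldiv₁ hldiv₂ hbr hd u ha

end
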